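/- arXiv:2208.07183 — 2 statements merged into one kernel-verified Lean document; each statement's English description precedes it below -/
import Mathlib

section
/- Let (L, R) be an orthogonal factorization system on a category B and let q : C → B be a functor admitting q-cocartesian lifts of all morphisms in L. Let C ×_B Ar_R(B) be the category of pairs (c, φ : q(c) → b) with φ ∈ R, with the evident morphisms, and let q′ : C ×_B Ar_R(B) → B send (c, φ) to the target of φ. Then q′ is a cocartesian fibration. Moreover, a morphism (α, β) : (c₀, φ₀) → (c₁, φ₁) is q′-cocartesian if and only if q(α) lies in L and α is q-cocartesian. -/
open CategoryTheory

universe v u v' u'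

/-- A morphism `α : c₀ → c₁` in `C` is `q`-cocartesian if for every `γ : c₀ → c₂` and
every factorization `q(γ) = q(α) ≫ δ` there is a unique `δ' : c₁ → c₂` with
`α ≫ δ' = γ` and `q(δ') = δ`. -/
def IsQCocartesian {C : Type u} [Category.{v} C] {B : Type u'} [Category.{v'} B]
    (q : C ⥤ B) {c₀ c₁ : C} (α : c₀ ⟶ c₁) : Prop :=
  ∀ {c₂ : C} (γ : c₀ ⟶ c₂) (δ : q.obj c₁ ⟶ q.obj c₂),
    q.map γ = q.map α ≫ δ → ∃! δ' : c₁ ⟶ c₂, α ≫ δ' = γ ∧ q.map δ' = δ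

variable {C : Type u} [Category.{v} C] {B : Type u'} [Category.{v'} B]

/-- An object of `C ×_B Ar_R(B)`: a pair `(c, φ : q(c) → b)` with `φ ∈ R`. -/
structure RPull (q : C ⥤ B) (R : MorphismProperty B) where
  c : C
  b : B
  φ : q.obj c ⟶ b
  hφ : R φ

/-- A morphism of `C ×_B Ar_R(B)`: a pair `(α, β)` with `φ₀ ≫ β = q(α) ≫ φ₁`. -/
@[ext]
structure RPullHom {q : C ⥤ B} {R : MorphismProperty B} (X Y : RPull q R) where
  α : X.c ⟶ Y.c
  β : X.b ⟶ Y.b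
  comm : X.φ ≫ β = q.map α ≫ Y.φ

instance (q : C ⥤ B) (R : MorphismProperty B) : Category (RPull q R) where
  Hom := RPullHom
  id X := ⟨𝟙 X.c, 𝟙 X.b, by simp⟩
  comp f g := ⟨f.α ≫ g.α, f.β ≫ g.β, by
    rw [Functor.map_comp, Category.assoc, ← g.comm, ← Category.assoc, f.comm,
      Category.assoc]⟩
  id_comp := by intros; apply RPullHom.ext <;> simp
  comp_id := by intros; apply RPullHom.ext <;> simp
  assoc := by intros; apply RPullHom.ext <;> simp

/-- The functor `q' : C ×_B Ar_R(B) → B`, evaluation at the target. -/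
def targetFunctor (q : C ⥤ B) (R : MorphismProperty B) : RPull q R ⥤ B where
  obj X := X.b
  map f := f.β
  map_id := fun _ => rfl
  map_comp := fun _ _ => rfl

theorem isQCocartesian_comp_iso {q : C ⥤ B} {c₀ c₁ c₁' : C} {α : c₀ ⟶ c₁}
    (hα : IsQCocartesian q α) (w : c₁ ⟶ c₁') [IsIso w] : IsQCocartesian q (α ≫ w) := by
  intro c₂ γ δ hδ
  obtain ⟨δ', ⟨h1, h2⟩, huniq⟩ := hα γ (q.map w ≫ δ)
    (by rw [hδ, q.map_comp, Category.assoc])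
  refine ⟨inv w ≫ δ', ⟨by simp [h1], by simp [h2]⟩, ?_⟩
  rintro y ⟨hy1, hy2⟩
  have := huniq (w ≫ y) ⟨by simpa using hy1, by simp [q.map_comp, hy2]⟩
  rw [← this]; simp

theorem rpull_cocartesian_of {q : C ⥤ B} {R : MorphismProperty B}
    {L : MorphismProperty B}
    (horth : ∀ {a b x y : B} (f : a ⟶ b) (φ : x ⟶ y), L f → R φ →
      ∀ (u : a ⟶ x) (v : b ⟶ y), u ≫ φ = f ≫ v →
        ∃! d : b ⟶ x, f ≫ d = u ∧ d ≫ φ = v)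
    {X Y : RPull q R} (m : RPullHom X Y)
    (hL : L (q.map m.α)) (hco : IsQCocartesian q m.α) :
    IsQCocartesian (targetFunctor q R) (show X ⟶ Y from m) := by
  intro Z γ δ hδ
  change Y.b ⟶ Z.b at δ
  have hδ' : γ.β = m.β ≫ δ := hδ
  obtain ⟨d, ⟨hd1, hd2⟩, hduniq⟩ := horth (q.map m.α) Z.φ hL Z.hφ (q.map γ.α) (Y.φ ≫ δ)
    (by rw [← γ.comm, hδ', ← Category.assoc, m.comm, Category.assoc])
  obtain ⟨δα, ⟨hδα1, hδα2⟩, hαuniq⟩ := hco γ.α d hd1.symm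
  refine ⟨⟨δα, δ, by rw [hδα2, hd2]⟩, ⟨?_, rfl⟩, ?_⟩
  · exact RPullHom.ext hδα1 hδ'.symm
  · rintro y ⟨hy1, hy2⟩
    have hyβ : y.β = δ := hy2
    have hyα : m.α ≫ y.α = γ.α := congrArg RPullHom.α hy1
    have hqy : q.map y.α = d := by
      refine hduniq (q.map y.α) ⟨by rw [← q.map_comp, hyα], ?_⟩
      rw [← y.comm, hyβ]
    have := hαuniq y.α ⟨hyα, hqy⟩
    exact RPullHom.ext this hyβ

/-- Let `(L, R)` be an orthogonal factorization system on `B` and `q : C → B` a functor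
admitting `q`-cocartesian lifts of all morphisms in `L`.  Then the target functor
`q' : C ×_B Ar_R(B) → B` is a cocartesian fibration, and a morphism `(α, β)` of
`C ×_B Ar_R(B)` is `q'`-cocartesian if and only if `q(α)` lies in `L` and `α` is
`q`-cocartesian. -/
theorem free_fibration_of_factorization_system
    (q : C ⥤ B) (L R : MorphismProperty B)
    (hLiso : ∀ {x y : B} (f : x ⟶ y), IsIso f → L f)
    (hRiso : ∀ {x y : B} (f : x ⟶ y), IsIso f → R f)
    (hLcomp : ∀ {x y z : B} (f : x ⟶ y) (g : y ⟶ z), L f → L g → L (f ≫ g))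
    (hRcomp : ∀ {x y z : B} (f : x ⟶ y) (g : y ⟶ z), R f → R g → R (f ≫ g))
    (hfact : ∀ {x y : B} (f : x ⟶ y),
      ∃ (z : B) (l : x ⟶ z) (r : z ⟶ y), L l ∧ R r ∧ l ≫ r = f)
    (horth : ∀ {a b x y : B} (f : a ⟶ b) (φ : x ⟶ y), L f → R φ →
      ∀ (u : a ⟶ x) (v : b ⟶ y), u ≫ φ = f ≫ v →
        ∃! d : b ⟶ x, f ≫ d = u ∧ d ≫ φ = v)
    -- `q` admits cocartesian lifts of all morphisms in `L`
    (hlift : ∀ (c : C) {b : B} (β : q.obj c ⟶ b), L β →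
      ∃ (c' : C) (α : c ⟶ c') (e : q.obj c' = b),
        q.map α ≫ eqToHom e = β ∧ IsQCocartesian q α) :
    -- (1) `q'` is a cocartesian fibration
    (∀ (X : RPull q R) {b' : B} (β : X.b ⟶ b'),
      ∃ (Y : RPull q R) (m : RPullHom X Y) (e : Y.b = b'),
        m.β ≫ eqToHom e = β ∧
        IsQCocartesian (targetFunctor q R) (show X ⟶ Y from m)) ∧
    -- (2) characterization of the `q'`-cocartesian morphisms
    (∀ {X Y : RPull q R} (m : RPullHom X Y),
      IsQCocartesian (targetFunctor q R) (show X ⟶ Y from m) ↔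
        (L (q.map m.α) ∧ IsQCocartesian q m.α)) := by
  -- strong form of the lifting statement
  have key : ∀ (X : RPull q R) (b' : B) (β : X.b ⟶ b'),
      ∃ (c' : C) (φ' : q.obj c' ⟶ b') (hφ' : R φ')
        (m : RPullHom X ⟨c', b', φ', hφ'⟩),
        m.β = β ∧ L (q.map m.α) ∧ IsQCocartesian q m.α := by
    intro X b' β
    obtain ⟨z, l, r, hl, hr, hlr⟩ := hfact (X.φ ≫ β)
    obtain ⟨c', α, e, h1, hco⟩ := hlift X.c l hl
    have hqα : q.map α = l ≫ eqToHom e.symm := by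
      rw [← h1]; simp
    refine ⟨c', eqToHom e ≫ r, hRcomp _ _ (hRiso _ inferInstance) hr,
      ⟨α, β, ?_⟩, rfl, ?_, hco⟩
    · rw [← Category.assoc, h1, hlr]
    · rw [hqα]
      exact hLcomp _ _ hl (hLiso _ inferInstance)
  constructor
  · intro X b' β
    obtain ⟨c', φ', hφ', m, hmβ, hmL, hmco⟩ := key X b' β
    exact ⟨⟨c', b', φ', hφ'⟩, m, rfl, by simpa using hmβ,
      rpull_cocartesian_of horth m hmL hmco⟩
  · intro X Y m
    constructor
    · intro hm
      obtain ⟨c', φ', hφ', m₀, hmβ, hmL, hmco⟩ := key X Y.b m.β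
      have hm₀ : IsQCocartesian (targetFunctor q R)
          (m₀ : X ⟶ (⟨c', Y.b, φ', hφ'⟩ : RPull q R)) :=
        rpull_cocartesian_of horth m₀ hmL hmco
      obtain ⟨u, ⟨hu1, hu2⟩, -⟩ := hm m₀ (𝟙 Y.b)
        (show m₀.β = m.β ≫ 𝟙 Y.b by rw [Category.comp_id]; exact hmβ)
      obtain ⟨v, ⟨hv1, hv2⟩, -⟩ := hm₀ m (𝟙 Y.b)
        (show m.β = m₀.β ≫ 𝟙 Y.b by rw [Category.comp_id]; exact hmβ.symm)
      have hu2' : u.β = 𝟙 Y.b := hu2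
      have hv2' : v.β = 𝟙 Y.b := hv2
      obtain ⟨w₁, -, hw₁⟩ := hm m (𝟙 Y.b)
        (show m.β = m.β ≫ 𝟙 Y.b from (Category.comp_id _).symm)
      have huv : u ≫ v = 𝟙 Y := by
        have a1 := hw₁ (u ≫ v) ⟨by rw [← Category.assoc, hu1, hv1],
          show u.β ≫ v.β = 𝟙 Y.b by rw [hu2', hv2', Category.comp_id]⟩
        have a2 := hw₁ (𝟙 Y) ⟨Category.comp_id _, rfl⟩
        rw [a1, a2]
      obtain ⟨w₂, -, hw₂⟩ := hm₀ m₀ (𝟙 Y.b)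
        (show m₀.β = m₀.β ≫ 𝟙 Y.b from (Category.comp_id _).symm)
      have hvu : v ≫ u = 𝟙 (⟨c', Y.b, φ', hφ'⟩ : RPull q R) := by
        have a1 := hw₂ (v ≫ u) ⟨by rw [← Category.assoc, hv1, hu1],
          show v.β ≫ u.β = 𝟙 Y.b by rw [hu2', hv2', Category.comp_id]⟩
        have a2 := hw₂ (𝟙 _) ⟨Category.comp_id _, rfl⟩
        rw [a1, a2]
      have huvα : RPullHom.α u ≫ RPullHom.α v = 𝟙 Y.c := congrArg RPullHom.α huv
      have hvuα : RPullHom.α v ≫ RPullHom.α u = 𝟙 c' := congrArg RPullHom.α hvu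
      have : IsIso (RPullHom.α v) := ⟨RPullHom.α u, hvuα, huvα⟩
      have hmα : m₀.α ≫ RPullHom.α v = m.α := congrArg RPullHom.α hv1
      constructor
      · rw [← hmα, q.map_comp]
        exact hLcomp _ _ hmL (hLiso _ inferInstance)
      · rw [← hmα]
        exact isQCocartesian_comp_iso hmco _
    · rintro ⟨h1, h2⟩
      exact rpull_cocartesian_of horth m h1 h2
end

section
/- Let B be a category with a wide subcategory B₀. For a functor p : E → B admitting p-cocartesian lifts of B₀-morphisms, the section i_E : E → E ×_B Ar₀(B), e ↦ (e, id_{p(e)}), admits a left adjoint π_E sending (e, φ : p(e) → b) to the target φ_! e of a p-cocartesian lift of φ at e, and the composite π_E ∘ i_E is naturally isomorphic to the identity. -/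
open CategoryTheory

universe v u v' u'

/-- A morphism `α : c₀ → c₁` in `E` is `p`-cocartesian if for every `γ : c₀ → c₂` and
every factorization `p(γ) = p(α) ≫ δ` there is a unique `δ' : c₁ → c₂` with
`α ≫ δ' = γ` and `p(δ') = δ`. -/
def IsPCocartesian {E : Type u} [Category.{v} E] {B : Type u'} [Category.{v'} B]
    (p : E ⥤ B) {c₀ c₁ : E} (α : c₀ ⟶ c₁) : Prop :=
  ∀ {c₂ : E} (γ : c₀ ⟶ c₂) (δ : p.obj c₁ ⟶ p.obj c₂),
    p.map γ = p.map α ≫ δ → ∃! δ' : c₁ ⟶ c₂, α ≫ δ' = γ ∧ p.map δ' = δ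

variable {E : Type u} [Category.{v} E] {B : Type u'} [Category.{v'} B]

/-- An object of `E ×_B Ar₀(B)`: a pair `(e, φ : p(e) → b)` with `φ` in the wide
subcategory `W = B₀`. -/
structure WidePull (p : E ⥤ B) (W : MorphismProperty B) where
  e : E
  b : B
  φ : p.obj e ⟶ b
  hφ : W φ

/-- A morphism of `E ×_B Ar₀(B)`. -/
@[ext]
structure WidePullHom {p : E ⥤ B} {W : MorphismProperty B} (X Y : WidePull p W) where
  α : X.e ⟶ Y.e
  β : X.b ⟶ Y.b
  comm : X.φ ≫ β = p.map α ≫ Y.φ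

instance (p : E ⥤ B) (W : MorphismProperty B) : Category (WidePull p W) where
  Hom := WidePullHom
  id X := ⟨𝟙 X.e, 𝟙 X.b, by simp⟩
  comp f g := ⟨f.α ≫ g.α, f.β ≫ g.β, by
    rw [Functor.map_comp, Category.assoc, ← g.comm, ← Category.assoc, f.comm,
      Category.assoc]⟩
  id_comp := by intros; apply WidePullHom.ext <;> simp
  comp_id := by intros; apply WidePullHom.ext <;> simp
  assoc := by intros; apply WidePullHom.ext <;> simp

/-- The canonical section `i_E : E → E ×_B Ar₀(B)`, `e ↦ (e, id_{p(e)})`. -/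
def sectionIE (p : E ⥤ B) (W : MorphismProperty B) (hid : ∀ b : B, W (𝟙 b)) :
    E ⥤ WidePull p W where
  obj x := ⟨x, p.obj x, 𝟙 _, hid _⟩
  map f := show WidePullHom _ _ from ⟨f, p.map f, by simp⟩
  map_id := by
    intro X
    apply WidePullHom.ext
    · rfl
    · show p.map (𝟙 X) = 𝟙 (p.obj X)
      simp
  map_comp := by
    intro X Y Z f g
    apply WidePullHom.ext
    · rfl
    · show p.map (f ≫ g) = p.map f ≫ p.map g
      simp

section Aux

@[simp] lemma WidePull.comp_α {p : E ⥤ B} {W : MorphismProperty B}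
    {X Y Z : WidePull p W} (f : X ⟶ Y) (g : Y ⟶ Z) :
    (f ≫ g).α = f.α ≫ g.α := rfl

@[simp] lemma WidePull.comp_β {p : E ⥤ B} {W : MorphismProperty B}
    {X Y Z : WidePull p W} (f : X ⟶ Y) (g : Y ⟶ Z) :
    (f ≫ g).β = f.β ≫ g.β := rfl

@[simp] lemma WidePull.id_α {p : E ⥤ B} {W : MorphismProperty B}
    (X : WidePull p W) : WidePullHom.α (𝟙 X) = 𝟙 X.e := rfl

@[simp] lemma WidePull.id_β {p : E ⥤ B} {W : MorphismProperty B}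
    (X : WidePull p W) : WidePullHom.β (𝟙 X) = 𝟙 X.b := rfl

variable (p : E ⥤ B)

/-- A choice of cocartesian lift. -/
structure CocartLift (x : E) {b : B} (φ : p.obj x ⟶ b) where
  tgt : E
  α : x ⟶ tgt
  h : p.obj tgt = b
  fac : p.map α ≫ eqToHom h = φ
  coc : IsPCocartesian p α

variable {p}

noncomputable def pDesc {x x' : E} {α : x ⟶ x'} (hc : IsPCocartesian p α)
    {c : E} (γ : x ⟶ c) (δ : p.obj x' ⟶ p.obj c) (hp : p.map γ = p.map α ≫ δ) :
    x' ⟶ c :=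
  (hc γ δ hp).exists.choose

lemma pDesc_fac {x x' : E} {α : x ⟶ x'} (hc : IsPCocartesian p α)
    {c : E} (γ : x ⟶ c) (δ : p.obj x' ⟶ p.obj c) (hp : p.map γ = p.map α ≫ δ) :
    α ≫ pDesc hc γ δ hp = γ :=
  (hc γ δ hp).exists.choose_spec.1

lemma pDesc_map {x x' : E} {α : x ⟶ x'} (hc : IsPCocartesian p α)
    {c : E} (γ : x ⟶ c) (δ : p.obj x' ⟶ p.obj c) (hp : p.map γ = p.map α ≫ δ) :
    p.map (pDesc hc γ δ hp) = δ :=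
  (hc γ δ hp).exists.choose_spec.2

lemma pDesc_unique {x x' : E} {α : x ⟶ x'} (hc : IsPCocartesian p α)
    {c : E} (γ : x ⟶ c) (δ : p.obj x' ⟶ p.obj c) (hp : p.map γ = p.map α ≫ δ)
    (d : x' ⟶ c) (h1 : α ≫ d = γ) (h2 : p.map d = δ) :
    d = pDesc hc γ δ hp := by
  obtain ⟨d', hd', hu⟩ := hc γ δ hp
  rw [hu d ⟨h1, h2⟩, hu _ ⟨pDesc_fac hc γ δ hp, pDesc_map hc γ δ hp⟩]

variable (p) in
lemma lift_map {W : MorphismProperty B} {X : WidePull p W}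
    (LX : CocartLift p X.e X.φ) : p.map LX.α = X.φ ≫ eqToHom LX.h.symm := by
  have h2 : (p.map LX.α ≫ eqToHom LX.h) ≫ eqToHom LX.h.symm
      = X.φ ≫ eqToHom LX.h.symm := by rw [LX.fac]
  simpa using h2

/-- The `hp` condition for the map of `piE`. -/
lemma piE_map_cond {W : MorphismProperty B} {X Y : WidePull p W}
    (LX : CocartLift p X.e X.φ) (LY : CocartLift p Y.e Y.φ) (f : X ⟶ Y) :
    p.map (f.α ≫ LY.α) =
      p.map LX.α ≫ eqToHom LX.h ≫ f.β ≫ eqToHom LY.h.symm := by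
  rw [Functor.map_comp, lift_map p LY, lift_map p LX, ← Category.assoc,
    ← f.comm]
  simp

variable (p) in
/-- The left adjoint `π_E`. -/
noncomputable def piE (W : MorphismProperty B)
    (L : ∀ X : WidePull p W, CocartLift p X.e X.φ) : WidePull p W ⥤ E where
  obj X := (L X).tgt
  map {X Y} f := pDesc (L X).coc (f.α ≫ (L Y).α)
    (eqToHom (L X).h ≫ f.β ≫ eqToHom (L Y).h.symm) (piE_map_cond (L X) (L Y) f)
  map_id X := by
    refine ((pDesc_unique (L X).coc _ _ (piE_map_cond (L X) (L X) (𝟙 X)) (𝟙 _) ?_ ?_)).symm <;> simp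
  map_comp {X Y Z} f g := by
    refine ((pDesc_unique (L X).coc _ _ (piE_map_cond (L X) (L Z) (f ≫ g)) _ ?_ ?_)).symm
    · rw [← Category.assoc, pDesc_fac]
      simp [pDesc_fac]
    · rw [Functor.map_comp, pDesc_map, pDesc_map]
      simp


variable (p) in
lemma invFun_cond {W : MorphismProperty B} (hid : ∀ b : B, W (𝟙 b))
    (L : ∀ X : WidePull p W, CocartLift p X.e X.φ)
    {X : WidePull p W} {e : E} (u : X ⟶ (sectionIE p W hid).obj e) :
    p.map u.α = p.map (L X).α ≫ eqToHom (L X).h ≫ u.β := by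
  have hu := u.comm
  simp only [sectionIE, Category.comp_id] at hu
  erw [← hu, lift_map p (L X)]
  simp
  rfl

variable (p) in
/-- The hom-equivalence core for the adjunction `piE ⊣ sectionIE`. -/
noncomputable def piECore (W : MorphismProperty B) (hid : ∀ b : B, W (𝟙 b))
    (L : ∀ X : WidePull p W, CocartLift p X.e X.φ) :
    Adjunction.CoreHomEquiv (piE p W L) (sectionIE p W hid) where
  homEquiv X e :=
    { toFun := fun g => ⟨(L X).α ≫ g, eqToHom (L X).h.symm ≫ p.map g, by
        erw [Functor.map_comp, lift_map p (L X)]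
        simp [sectionIE]⟩
      invFun := fun u => pDesc (L X).coc u.α (eqToHom (L X).h ≫ u.β)
        (invFun_cond p hid L u)
      left_inv := fun g => by
        refine (pDesc_unique (L X).coc _ _ _ g rfl ?_).symm
        simp
        erw [eqToHom_trans_assoc, eqToHom_refl, Category.id_comp]
      right_inv := fun u => by
        apply WidePullHom.ext
        · exact pDesc_fac _ _ _ _
        · show eqToHom (L X).h.symm ≫ p.map (pDesc _ _ _ _) = u.β
          erw [pDesc_map]
          erw [eqToHom_trans_assoc, eqToHom_refl, Category.id_comp] }
  homEquiv_naturality_left_symm := by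
    intro X' X e f g
    refine (pDesc_unique (L X').coc (f ≫ g).α (eqToHom (L X').h ≫ (f ≫ g).β)
      (invFun_cond p hid L (f ≫ g)) _ ?_ ?_).symm
    · dsimp only [piE, Equiv.coe_fn_symm_mk]
      erw [← Category.assoc,
        pDesc_fac (L X').coc _ _ (piE_map_cond (L X') (L X) f), Category.assoc,
        pDesc_fac (L X).coc g.α (eqToHom (L X).h ≫ g.β) (invFun_cond p hid L g)]
      rfl
    · dsimp only [piE, Equiv.coe_fn_symm_mk]
      erw [Functor.map_comp,
        pDesc_map (L X').coc _ _ (piE_map_cond (L X') (L X) f),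
        pDesc_map (L X).coc g.α (eqToHom (L X).h ≫ g.β) (invFun_cond p hid L g)]
      simp
      erw [eqToHom_trans_assoc, eqToHom_refl, Category.id_comp]
      rfl
  homEquiv_naturality_right := by
    intro X e e' g k
    apply WidePullHom.ext
    · show (L X).α ≫ g ≫ k = ((L X).α ≫ g) ≫ k
      exact (Category.assoc _ _ _).symm
    · show eqToHom (L X).h.symm ≫ p.map (g ≫ k) =
        (eqToHom (L X).h.symm ≫ p.map g) ≫ p.map ((sectionIE p W hid).map k).α
      show eqToHom (L X).h.symm ≫ p.map (g ≫ k) =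
        (eqToHom (L X).h.symm ≫ p.map g) ≫ p.map k
      simp
      erw [Functor.map_comp]

end Aux

/-- Let `B₀ = W` be a wide subcategory of `B` and `p : E → B` a functor admitting
`p`-cocartesian lifts of all morphisms in `B₀`.  Then the section
`i_E : E → E ×_B Ar₀(B)` admits a left adjoint `π_E` sending `(e, φ : p(e) → b)` to
the target `φ_! e` of a `p`-cocartesian lift of `φ` at `e`, and `π_E ∘ i_E` is
naturally isomorphic to the identity. -/
theorem section_iE_has_left_adjoint
    (p : E ⥤ B) (W : MorphismProperty B)
    (hid : ∀ b : B, W (𝟙 b))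
    (hcomp : ∀ {x y z : B} (f : x ⟶ y) (g : y ⟶ z), W f → W g → W (f ≫ g))
    -- `p` admits cocartesian lifts of all morphisms in the wide subcategory
    (hlift : ∀ (x : E) {b : B} (φ : p.obj x ⟶ b), W φ →
      ∃ (x' : E) (α : x ⟶ x') (h : p.obj x' = b),
        p.map α ≫ eqToHom h = φ ∧ IsPCocartesian p α) :
    ∃ (πE : WidePull p W ⥤ E) (_ : πE ⊣ sectionIE p W hid),
      -- `π_E` sends `(e, φ)` to the target of a `p`-cocartesian lift of `φ`
      (∀ X : WidePull p W,
        ∃ (α : X.e ⟶ πE.obj X) (h : p.obj (πE.obj X) = X.b),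
          p.map α ≫ eqToHom h = X.φ ∧ IsPCocartesian p α) ∧
      -- `π_E ∘ i_E ≅ id`
      Nonempty (sectionIE p W hid ⋙ πE ≅ 𝟭 E) := by
  have L : ∀ X : WidePull p W, CocartLift p X.e X.φ := fun X =>
    let H := hlift X.e X.φ X.hφ
    ⟨H.choose, H.choose_spec.choose, H.choose_spec.choose_spec.choose,
     H.choose_spec.choose_spec.choose_spec.1,
     H.choose_spec.choose_spec.choose_spec.2⟩
  set adj := Adjunction.mkOfHomEquiv (piECore p W hid L) with hadj
  have hiso : ∀ e : E, IsIso (adj.counit.app e) := by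
    intro e
    set X := (sectionIE p W hid).obj e with hX
    have hφ : X.φ = 𝟙 (p.obj e) := rfl
    have hcu : adj.counit.app e =
        pDesc (L X).coc (WidePullHom.α (𝟙 X)) (eqToHom (L X).h ≫ WidePullHom.β (𝟙 X))
          (invFun_cond p hid L (𝟙 X)) := by
      rw [hadj]
      rfl
    have hmapα : p.map (L X).α = eqToHom (L X).h.symm := by
      rw [lift_map p (L X)]; exact Category.id_comp _
    have hfac : (L X).α ≫ adj.counit.app e = 𝟙 e := by
      erw [hcu, pDesc_fac]
      rfl
    have hmapc : p.map (adj.counit.app e) = eqToHom (L X).h := by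
      erw [hcu, pDesc_map]
      show eqToHom (L X).h ≫ 𝟙 _ = _
      simp
    refine ⟨(L X).α, ?_, hfac⟩
    have c1 : adj.counit.app e ≫ (L X).α =
        pDesc (L X).coc (L X).α (𝟙 _) (by simp) := by
      refine pDesc_unique (L X).coc _ _ _ _ ?_ ?_
      · erw [← Category.assoc, hfac]
        exact Category.id_comp _
      · erw [Functor.map_comp, hmapα, hmapc]
        simp
        erw [eqToHom_trans, eqToHom_refl]
    have c2 : 𝟙 (L X).tgt = pDesc (L X).coc (L X).α (𝟙 _) (by simp) := by
      refine pDesc_unique (L X).coc _ _ _ _ (by simp) (by simp)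
    erw [c1, ← c2]
    rfl
  refine ⟨piE p W L, adj, fun X => ⟨(L X).α, (L X).h, (L X).fac, (L X).coc⟩, ?_⟩
  have : IsIso adj.counit := NatIso.isIso_of_isIso_app adj.counit
  exact ⟨asIso adj.counit⟩
end
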